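/- arXiv:2210.06086 — 9 statements merged into one kernel-verified Lean document; each statement's English description precedes it below -/
import Mathlib

section
/- Let E be a real inner product space, Z ⊆ E a nonempty convex set, G : E → ℝ a convex Fréchet-differentiable function whose gradient is L-Lipschitz (L ≥ 0), and H : Z → E any map. Fix points z̄₋, z₋, z̃, z ∈ Z and γ ∈ [0, 1], and set z̲ = (1−γ)·z̄₋ + γ·z₋ and z̄ = (1−γ)·z̄₋ + γ·z̃. Then [G(z̄) − G(z) + ⟨H(z), z̄ − z⟩] − (1−γ)·[G(z̄₋) − G(z) + ⟨H(z), z̄₋ − z⟩] ≤ γ·( ⟨∇G(z̲) + H(z), z̃ − z⟩ + (L·γ/2)·‖z̃ − z₋‖² ). -/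
open RealInnerProductSpace

private lemma mps_line_hasDerivAt
    {E : Type*} [NormedAddCommGroup E] [InnerProductSpace ℝ E] [CompleteSpace E]
    {G : E → ℝ} {G' : E → E} (hGdiff : ∀ x : E, HasGradientAt G (G' x) x)
    (x v : E) (t : ℝ) :
    HasDerivAt (fun s : ℝ => G (x + s • v)) ⟪G' (x + t • v), v⟫ t := by
  have h1 : HasDerivAt (fun s : ℝ => x + s • v) v t := by
    simpa using ((hasDerivAt_id t).smul_const v).const_add x
  have h2 : HasFDerivAt G (InnerProductSpace.toDual ℝ E (G' (x + t • v))) (x + t • v) :=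
    (hGdiff (x + t • v))
  have := h2.comp_hasDerivAt t h1
  simpa [InnerProductSpace.toDual_apply_apply, Function.comp_def] using this

private lemma mps_grad_ineq
    {E : Type*} [NormedAddCommGroup E] [InnerProductSpace ℝ E] [CompleteSpace E]
    {G : E → ℝ} {G' : E → E} (hGconv : ConvexOn ℝ Set.univ G)
    (hGdiff : ∀ x : E, HasGradientAt G (G' x) x) (x y : E) :
    G x + ⟪G' x, y - x⟫ ≤ G y := by
  set v := y - x with hv
  have he : ∀ s : ℝ, (AffineMap.lineMap x y : ℝ →ᵃ[ℝ] E) s = x + s • v := by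
    intro s; simp [AffineMap.lineMap_apply, hv]; abel
  have hφ : ConvexOn ℝ Set.univ (fun s : ℝ => G (x + s • v)) := by
    have hc := hGconv.comp_affineMap (AffineMap.lineMap x y : ℝ →ᵃ[ℝ] E)
    have heq : (fun s : ℝ => G (x + s • v)) = G ∘ (AffineMap.lineMap x y : ℝ →ᵃ[ℝ] E) := by
      funext s; exact (congrArg G (he s)).symm
    rw [heq]
    simpa using hc
  have hd := mps_line_hasDerivAt hGdiff x v 0
  have hs := hφ.le_slope_of_hasDerivAt (Set.mem_univ (0:ℝ)) (Set.mem_univ (1:ℝ))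
    (by norm_num) (by simpa using hd)
  rw [slope_def_field] at hs
  simp only [zero_smul, add_zero, one_smul, sub_zero, div_one] at hs
  have hx1 : x + v = y := by rw [hv]; abel
  rw [hx1] at hs
  linarith

private lemma mps_descent
    {E : Type*} [NormedAddCommGroup E] [InnerProductSpace ℝ E] [CompleteSpace E]
    {G : E → ℝ} {G' : E → E}
    (hGdiff : ∀ x : E, HasGradientAt G (G' x) x)
    {L : ℝ} (hL : 0 ≤ L) (hGLip : ∀ x y : E, ‖G' x - G' y‖ ≤ L * ‖x - y‖)
    (x y : E) :
    G y ≤ G x + ⟪G' x, y - x⟫ + L / 2 * ‖y - x‖ ^ 2 := by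
  set v := y - x with hv
  set ψ : ℝ → ℝ := fun t => G (x + t • v) - t * ⟪G' x, v⟫ - L * ‖v‖ ^ 2 * t ^ 2 / 2 with hψ
  have hψd : ∀ t : ℝ, HasDerivAt ψ (⟪G' (x + t • v), v⟫ - ⟪G' x, v⟫ - L * ‖v‖ ^ 2 * t) t := by
    intro t
    have h1 := mps_line_hasDerivAt hGdiff x v t
    have h2 : HasDerivAt (fun t : ℝ => t * ⟪G' x, v⟫) ⟪G' x, v⟫ t := by
      simpa using (hasDerivAt_id t).mul_const ⟪G' x, v⟫
    have h3 : HasDerivAt (fun t : ℝ => L * ‖v‖ ^ 2 * t ^ 2 / 2) (L * ‖v‖ ^ 2 * t) t := by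
      have := ((hasDerivAt_pow 2 t).const_mul (L * ‖v‖ ^ 2)).div_const 2
      refine this.congr_deriv ?_; ring
    exact (h1.sub h2).sub h3
  have hmono : AntitoneOn ψ (Set.Icc 0 1) := by
    apply antitoneOn_of_deriv_nonpos (convex_Icc 0 1)
    · exact fun t _ => ((hψd t).differentiableAt).continuousAt.continuousWithinAt
    · intro t ht
      exact ((hψd t).differentiableAt).differentiableWithinAt
    · intro t ht
      rw [interior_Icc] at ht
      rw [(hψd t).deriv]
      have hip : ⟪G' (x + t • v) - G' x, v⟫ ≤ L * t * ‖v‖ ^ 2 := by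
        calc ⟪G' (x + t • v) - G' x, v⟫ ≤ ‖G' (x + t • v) - G' x‖ * ‖v‖ :=
              real_inner_le_norm _ _
          _ ≤ (L * ‖x + t • v - x‖) * ‖v‖ := by
              apply mul_le_mul_of_nonneg_right (hGLip _ _) (norm_nonneg _)
          _ = L * (|t| * ‖v‖) * ‖v‖ := by simp [norm_smul, abs_of_nonneg, Real.norm_eq_abs]
          _ = L * |t| * ‖v‖ ^ 2 := by ring
          _ = L * t * ‖v‖ ^ 2 := by rw [abs_of_pos ht.1]
      have := inner_sub_left (𝕜 := ℝ) (G' (x + t • v)) (G' x) v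
      nlinarith [this]
  have h01 := hmono (Set.left_mem_Icc.2 zero_le_one) (Set.right_mem_Icc.2 zero_le_one) zero_le_one
  have h0 : ψ 0 = G x := by simp [hψ]
  have h1 : ψ 1 = G y - ⟪G' x, v⟫ - L * ‖v‖ ^ 2 / 2 := by simp [hψ, hv]
  rw [h0, h1] at h01
  linarith

theorem mps_outer_step_estimate
    {E : Type*} [NormedAddCommGroup E] [InnerProductSpace ℝ E] [CompleteSpace E]
    (Z : Set E) (hZne : Z.Nonempty) (hZconv : Convex ℝ Z)
    (G : E → ℝ) (G' : E → E)
    (hGconv : ConvexOn ℝ Set.univ G)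
    (hGdiff : ∀ x : E, HasGradientAt G (G' x) x)
    (L : ℝ) (hL : 0 ≤ L)
    (hGLip : ∀ x y : E, ‖G' x - G' y‖ ≤ L * ‖x - y‖)
    (H : E → E)
    (zbm zm zt z : E) (hzbm : zbm ∈ Z) (hzm : zm ∈ Z) (hzt : zt ∈ Z) (hz : z ∈ Z)
    (γ : ℝ) (hγ0 : 0 ≤ γ) (hγ1 : γ ≤ 1)
    (zu : E) (hzu : zu = (1 - γ) • zbm + γ • zm)
    (zb : E) (hzb : zb = (1 - γ) • zbm + γ • zt) :
    (G zb - G z + ⟪H z, zb - z⟫) - (1 - γ) * (G zbm - G z + ⟪H z, zbm - z⟫)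
      ≤ γ * (⟪G' zu + H z, zt - z⟫ + L * γ / 2 * ‖zt - zm‖ ^ 2) := by
  set g := G' zu with hg
  -- three key inequalities
  have h1 : G zu + ⟪g, zbm - zu⟫ ≤ G zbm := mps_grad_ineq hGconv hGdiff zu zbm
  have h2 : G zu + ⟪g, z - zu⟫ ≤ G z := mps_grad_ineq hGconv hGdiff zu z
  have h3 : G zb ≤ G zu + ⟪g, zb - zu⟫ + L / 2 * ‖zb - zu‖ ^ 2 :=
    mps_descent hGdiff hL hGLip zu zb
  -- vector identities
  have hbu : zb - zu = γ • (zt - zm) := by rw [hzb, hzu]; module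
  have hnorm : ‖zb - zu‖ ^ 2 = γ ^ 2 * ‖zt - zm‖ ^ 2 := by
    rw [hbu, norm_smul, Real.norm_eq_abs, abs_of_nonneg hγ0, mul_pow]
  have hvb : zb - zu = (1 - γ) • (zbm - zu) + γ • (z - zu) + γ • (zt - z) := by
    rw [hzb, hzu]; module
  have hib : ⟪g, zb - zu⟫ = (1 - γ) * ⟪g, zbm - zu⟫ + γ * ⟪g, z - zu⟫ + γ * ⟪g, zt - z⟫ := by
    rw [hvb, inner_add_right, inner_add_right, real_inner_smul_right, real_inner_smul_right,
      real_inner_smul_right]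
  have hvH : zb - z = (1 - γ) • (zbm - z) + γ • (zt - z) := by rw [hzb]; module
  have hiH : ⟪H z, zb - z⟫ = (1 - γ) * ⟪H z, zbm - z⟫ + γ * ⟪H z, zt - z⟫ := by
    rw [hvH, inner_add_right, real_inner_smul_right, real_inner_smul_right]
  have hsum : ⟪g + H z, zt - z⟫ = ⟪g, zt - z⟫ + ⟪H z, zt - z⟫ := inner_add_left _ _ _
  have hγ1' : (0:ℝ) ≤ 1 - γ := by linarith
  have m1 : (1 - γ) * (G zu + ⟪g, zbm - zu⟫) ≤ (1 - γ) * G zbm :=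
    mul_le_mul_of_nonneg_left h1 hγ1'
  have m2 : γ * (G zu + ⟪g, z - zu⟫) ≤ γ * G z := mul_le_mul_of_nonneg_left h2 hγ0
  rw [hsum, hiH]
  rw [hnorm, hib] at h3
  nlinarith [m1, m2, h3]
end

section
/- Let E be a real inner product space, Z ⊆ E a nonempty convex set, H : Z → E monotone on Z and satisfying the (M, δ)-condition on Z (M > 0, δ ≥ 0), and V a Bregman-type distance on Z. Let g ∈ E, let T ≥ 1 be an integer, let β > 0 and η¹, …, η^T > 0 satisfy M ≤ η^t for all t and M ≤ β + η^t for all t and η^t ≤ β + η^{t−1} for 2 ≤ t ≤ T. Let a ∈ Z, z⁰ = a, and let z¹, …, z^T, z̃¹, …, z̃^T ∈ Z be points such that for every t = 1, …, T and every z ∈ Z the prox inequality holds: ⟨g, z̃^t − z⟩ + ⟨H(z̃^t), z^t − z⟩ + ⟨H(z^{t−1}), z̃^t − z^t⟩ ≤ β·(V(a, z) − V(z^t, z) − V(a, z̃^t) − V(z̃^t, z^t)) + η^t·(V(z^{t−1}, z) − V(z^t, z) − V(z^{t−1}, z̃^t) − V(z̃^t, z^t)). Set z̃ = (1/T)·Σ_{t=1}^T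 z̃^t. Then for every z ∈ Z: ⟨g + H(z), z̃ − z⟩ ≤ −β·V(a, z̃) + (β + η¹/T)·V(a, z) − ((β + η^T)/T)·V(z^T, z) + δ. -/
/-!
Each inner step is an extragradient step: in the prox inequality, monotonicity of `H` at `z`
and the `(M, δ)`-condition absorb the terms `V (z^{t-1}, z̃^t)` and `V (z̃^t, z^t)`, leaving
`⟨g + H z, z̃^t - z⟩ ≤ β (V(a, z) - V(z^t, z) - V(a, z̃^t)) + η^t (V(z^{t-1}, z) - V(z^t, z)) + δ`.
Summed over `t`, the terms `V(z^t, z)` telescope thanks to `η^{t+1} ≤ β + η^t`; dividing by `T`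
and bounding the average of `V(a, z̃^t)` from below by `V(a, z̃)` (Jensen) gives the claim.
-/

open RealInnerProductSpace Finset

lemma nonneg_of_half_sq_norm_le {E : Type*} [NormedAddCommGroup E] {Z : Set E}
    {V : E → E → ℝ} (hVlb : ∀ u ∈ Z, ∀ w ∈ Z, 1 / 2 * ‖u - w‖ ^ 2 ≤ V u w)
    {u w : E} (hu : u ∈ Z) (hw : w ∈ Z) : 0 ≤ V u w :=
  le_trans (by positivity) (hVlb u hu w hw)

section Bregman

variable {E : Type*} [NormedAddCommGroup E] [InnerProductSpace ℝ E]
  {Z : Set E} {H : E → E} {V : E → E → ℝ} {M δ : ℝ}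

lemma inner_map_sub_le_of_Mδ (hM : 0 ≤ M)
    (hMδ : ∀ z₁ ∈ Z, ∀ z₂ ∈ Z, ∀ z₃ ∈ Z,
      ⟪H z₁ - H z₂, z₁ - z₃⟫ ≤ M / 2 * ‖z₁ - z₂‖ ^ 2 + M / 2 * ‖z₁ - z₃‖ ^ 2 + δ)
    (hVlb : ∀ u ∈ Z, ∀ w ∈ Z, 1 / 2 * ‖u - w‖ ^ 2 ≤ V u w)
    {c₁ c₂ : ℝ} (hc₁ : M ≤ c₁) (hc₂ : M ≤ c₂) {p q r : E} (hp : p ∈ Z) (hq : q ∈ Z) (hr : r ∈ Z) :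
    ⟪H r - H p, r - q⟫ ≤ c₁ * V p r + c₂ * V r q + δ := by
  have hpr : M / 2 * ‖r - p‖ ^ 2 ≤ c₁ * V p r := by
    rw [norm_sub_rev]
    nlinarith [hVlb p hp r hr, nonneg_of_half_sq_norm_le hVlb hp hr]
  have hrq : M / 2 * ‖r - q‖ ^ 2 ≤ c₂ * V r q := by
    nlinarith [hVlb r hr q hq, nonneg_of_half_sq_norm_le hVlb hr hq]
  linarith [hMδ r hr p hp q hq]

lemma inner_add_sub_le_of_prox_step (hM : 0 ≤ M)
    (hmono : ∀ u ∈ Z, ∀ v ∈ Z, 0 ≤ ⟪H u - H v, u - v⟫)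
    (hMδ : ∀ z₁ ∈ Z, ∀ z₂ ∈ Z, ∀ z₃ ∈ Z,
      ⟪H z₁ - H z₂, z₁ - z₃⟫ ≤ M / 2 * ‖z₁ - z₂‖ ^ 2 + M / 2 * ‖z₁ - z₃‖ ^ 2 + δ)
    (hVlb : ∀ u ∈ Z, ∀ w ∈ Z, 1 / 2 * ‖u - w‖ ^ 2 ≤ V u w)
    {g a p q r z : E} {β η : ℝ} (hMη : M ≤ η) (hMβη : M ≤ β + η)
    (hp : p ∈ Z) (hq : q ∈ Z) (hr : r ∈ Z) (hz : z ∈ Z)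
    (hprox : ⟪g, r - z⟫ + ⟪H r, q - z⟫ + ⟪H p, r - q⟫
      ≤ β * (V a z - V q z - V a r - V r q) + η * (V p z - V q z - V p r - V r q)) :
    ⟪g + H z, r - z⟫ ≤ β * (V a z - V q z - V a r) + η * (V p z - V q z) + δ := by
  have hsplit : ⟪g + H z, r - z⟫ = (⟪g, r - z⟫ + ⟪H r, q - z⟫ + ⟪H p, r - q⟫)
      + ⟪H r - H p, r - q⟫ - ⟪H r - H z, r - z⟫ := by
    simp only [inner_add_left, inner_sub_left, inner_sub_right]
    ring
  have herr := inner_map_sub_le_of_Mδ hM hMδ hVlb hMη hMβη hp hq hr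
  linarith [hmono r hr z hz]

end Bregman

/-- The `v`-terms telescope up to the nonpositive remainders `(η (t + 1) - β - η t) * v t`. -/
lemma sum_le_of_step_bounds {X v w η : ℕ → ℝ} {A β δ : ℝ} {n : ℕ} (hn : 1 ≤ n)
    (hX : ∀ t ∈ Icc 1 n, X t ≤ β * (A - v t - w t) + η t * (v (t - 1) - v t) + δ)
    (hη : ∀ t ∈ Icc 2 n, η t ≤ β + η (t - 1)) (hv : ∀ t ∈ Icc 1 n, 0 ≤ v t) :
    ∑ t ∈ Icc 1 n, X t
      ≤ n * (β * A + δ) - β * ∑ t ∈ Icc 1 n, w t + η 1 * v 0 - (β + η n) * v n := by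
  induction n, hn using Nat.le_induction with
  | base =>
    have hX1 := hX 1 (by simp)
    simp only [Icc_self, sum_singleton, Nat.cast_one]
    linarith
  | succ n hn ih =>
    have hXn := hX (n + 1) (by simp)
    have hηn := hη (n + 1) (mem_Icc.mpr ⟨by omega, le_rfl⟩)
    have hvn := hv n (mem_Icc.mpr ⟨hn, by omega⟩)
    have ih' := ih (fun t ht => hX t (Icc_subset_Icc_right (by omega) ht))
      (fun t ht => hη t (Icc_subset_Icc_right (by omega) ht))
      (fun t ht => hv t (Icc_subset_Icc_right (by omega) ht))
    simp only [Nat.add_sub_cancel] at hXn hηn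
    rw [sum_Icc_succ_top (by omega), sum_Icc_succ_top (by omega)]
    push_cast
    linarith [mul_nonneg (sub_nonneg.mpr hηn) hvn]

lemma ConvexOn.map_card_inv_smul_sum_le {E : Type*} [AddCommGroup E] [Module ℝ E] {Z : Set E}
    {f : E → ℝ} (hf : ConvexOn ℝ Z f) {ι : Type*} {s : Finset ι} (hs : s.Nonempty)
    {x : ι → E} (hx : ∀ i ∈ s, x i ∈ Z) :
    f ((#s : ℝ)⁻¹ • ∑ i ∈ s, x i) ≤ (#s : ℝ)⁻¹ * ∑ i ∈ s, f (x i) := by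
  have hcard : (0 : ℝ) < #s := by exact_mod_cast hs.card_pos
  rw [smul_sum, mul_sum]
  exact hf.map_sum_le (fun _ _ => by positivity)
    (by rw [sum_const, nsmul_eq_mul]; field_simp) hx

lemma inner_average_sub {E : Type*} [NormedAddCommGroup E] [InnerProductSpace ℝ E]
    {ι : Type*} {s : Finset ι} (hs : s.Nonempty) (y z : E) (x : ι → E) :
    ⟪y, (#s : ℝ)⁻¹ • ∑ i ∈ s, x i - z⟫ = (#s : ℝ)⁻¹ * ∑ i ∈ s, ⟪y, x i - z⟫ := by
  have hcard : (#s : ℝ) ≠ 0 := by exact_mod_cast hs.card_pos.ne'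
  simp only [inner_sub_right, inner_smul_right, inner_sum, sum_sub_distrib, sum_const,
    nsmul_eq_mul]
  field_simp

theorem mps_inner_loop_deterministic_general
    {E : Type*} [NormedAddCommGroup E] [InnerProductSpace ℝ E]
    (Z : Set E)
    (H : E → E) (M δ : ℝ) (hM : 0 < M)
    (hmono : ∀ u ∈ Z, ∀ v ∈ Z, 0 ≤ ⟪H u - H v, u - v⟫)
    (hMδ : ∀ z₁ ∈ Z, ∀ z₂ ∈ Z, ∀ z₃ ∈ Z,
      ⟪H z₁ - H z₂, z₁ - z₃⟫ ≤ M / 2 * ‖z₁ - z₂‖ ^ 2 + M / 2 * ‖z₁ - z₃‖ ^ 2 + δ)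
    (V : E → E → ℝ)
    (hVlb : ∀ u ∈ Z, ∀ w ∈ Z, 1 / 2 * ‖u - w‖ ^ 2 ≤ V u w)
    (hVconv : ∀ u ∈ Z, ConvexOn ℝ Z (V u))
    (g : E) (T : ℕ) (hT : 1 ≤ T)
    (β : ℝ) (hβ : 0 < β)
    (η : ℕ → ℝ)
    (hMη : ∀ t ∈ Icc 1 T, M ≤ η t)
    (hMβη : ∀ t ∈ Icc 1 T, M ≤ β + η t)
    (hηchain : ∀ t ∈ Icc 2 T, η t ≤ β + η (t - 1))
    (a : E) (ha : a ∈ Z)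
    (zs zts : ℕ → E) (hz0 : zs 0 = a)
    (hzsZ : ∀ t ∈ Icc 1 T, zs t ∈ Z) (hztsZ : ∀ t ∈ Icc 1 T, zts t ∈ Z)
    (hprox : ∀ t ∈ Icc 1 T, ∀ z ∈ Z,
      ⟪g, zts t - z⟫ + ⟪H (zts t), zs t - z⟫ + ⟪H (zs (t - 1)), zts t - zs t⟫
        ≤ β * (V a z - V (zs t) z - V a (zts t) - V (zts t) (zs t))
          + η t * (V (zs (t - 1)) z - V (zs t) z - V (zs (t - 1)) (zts t)
              - V (zts t) (zs t)))
    (ztavg : E) (havg : ztavg = (T : ℝ)⁻¹ • ∑ t ∈ Icc 1 T, zts t) :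
    ∀ z ∈ Z,
      ⟪g + H z, ztavg - z⟫
        ≤ -β * V a ztavg + (β + η 1 / T) * V a z
            - (β + η T) / T * V (zs T) z + δ := by
  intro z hz
  have hne : (Icc 1 T).Nonempty := nonempty_Icc.mpr hT
  have hcard : (#(Icc 1 T) : ℝ) = T := by simp
  have hT0 : (0 : ℝ) < T := by exact_mod_cast hT
  have hprev : ∀ t ∈ Icc 1 T, zs (t - 1) ∈ Z := by
    intro t ht
    obtain ⟨h1, htT⟩ := mem_Icc.mp ht
    rcases h1.eq_or_lt with rfl | h1
    · simpa [hz0] using ha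
    · exact hzsZ (t - 1) (mem_Icc.mpr ⟨by omega, by omega⟩)
  have hsum := sum_le_of_step_bounds (X := fun t => ⟪g + H z, zts t - z⟫) hT
    (fun t ht => inner_add_sub_le_of_prox_step hM.le hmono hMδ hVlb (hMη t ht) (hMβη t ht)
      (hprev t ht) (hzsZ t ht) (hztsZ t ht) hz (hprox t ht z hz)) hηchain
    (fun t ht => nonneg_of_half_sq_norm_le hVlb (hzsZ t ht) hz)
  rw [hz0] at hsum
  have hjensen : V a ztavg ≤ (T : ℝ)⁻¹ * ∑ t ∈ Icc 1 T, V a (zts t) := by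
    rw [havg, ← hcard]
    exact (hVconv a ha).map_card_inv_smul_sum_le hne hztsZ
  have hinner : ⟪g + H z, ztavg - z⟫ = (T : ℝ)⁻¹ * ∑ t ∈ Icc 1 T, ⟪g + H z, zts t - z⟫ := by
    rw [havg, ← hcard]
    exact inner_average_sub hne _ _ _
  rw [hinner, inv_mul_le_iff₀ hT0]
  have hexpand : (T : ℝ) * (-β * V a ztavg + (β + η 1 / T) * V a z
      - (β + η T) / T * V (zs T) z + δ) = T * (β * V a z + δ) - β * (T * V a ztavg)
        + η 1 * V a z - (β + η T) * V (zs T) z := by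
    field_simp
    ring
  rw [hexpand]
  linarith [mul_le_mul_of_nonneg_left ((le_inv_mul_iff₀ hT0).mp hjensen) hβ.le]

theorem mps_inner_loop_deterministic
    {E : Type*} [NormedAddCommGroup E] [InnerProductSpace ℝ E]
    (Z : Set E) (hZne : Z.Nonempty) (hZconv : Convex ℝ Z)
    (H : E → E) (M δ : ℝ) (hM : 0 < M) (hδ : 0 ≤ δ)
    (hmono : ∀ u ∈ Z, ∀ v ∈ Z, 0 ≤ ⟪H u - H v, u - v⟫)
    (hMδ : ∀ z₁ ∈ Z, ∀ z₂ ∈ Z, ∀ z₃ ∈ Z,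
      ⟪H z₁ - H z₂, z₁ - z₃⟫ ≤ M / 2 * ‖z₁ - z₂‖ ^ 2 + M / 2 * ‖z₁ - z₃‖ ^ 2 + δ)
    (V : E → E → ℝ)
    (hVlb : ∀ u ∈ Z, ∀ w ∈ Z, 1 / 2 * ‖u - w‖ ^ 2 ≤ V u w)
    (hVzero : ∀ u ∈ Z, V u u = 0)
    (hVconv : ∀ u ∈ Z, ConvexOn ℝ Z (V u))
    (g : E) (T : ℕ) (hT : 1 ≤ T)
    (β : ℝ) (hβ : 0 < β)
    (η : ℕ → ℝ) (hηpos : ∀ t ∈ Icc 1 T, 0 < η t)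
    (hMη : ∀ t ∈ Icc 1 T, M ≤ η t)
    (hMβη : ∀ t ∈ Icc 1 T, M ≤ β + η t)
    (hηchain : ∀ t ∈ Icc 2 T, η t ≤ β + η (t - 1))
    (a : E) (ha : a ∈ Z)
    (zs zts : ℕ → E) (hz0 : zs 0 = a)
    (hzsZ : ∀ t ∈ Icc 1 T, zs t ∈ Z) (hztsZ : ∀ t ∈ Icc 1 T, zts t ∈ Z)
    (hprox : ∀ t ∈ Icc 1 T, ∀ z ∈ Z,
      ⟪g, zts t - z⟫ + ⟪H (zts t), zs t - z⟫ + ⟪H (zs (t - 1)), zts t - zs t⟫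
        ≤ β * (V a z - V (zs t) z - V a (zts t) - V (zts t) (zs t))
          + η t * (V (zs (t - 1)) z - V (zs t) z - V (zs (t - 1)) (zts t)
              - V (zts t) (zs t)))
    (ztavg : E) (havg : ztavg = (T : ℝ)⁻¹ • ∑ t ∈ Icc 1 T, zts t) :
    ∀ z ∈ Z,
      ⟪g + H z, ztavg - z⟫
        ≤ -β * V a ztavg + (β + η 1 / T) * V a z
            - (β + η T) / T * V (zs T) z + δ :=
  mps_inner_loop_deterministic_general Z H M δ hM hmono hMδ V hVlb hVconv g T hT β hβ η hMη hMβη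
    hηchain a ha zs zts hz0 hzsZ hztsZ hprox ztavg havg
end

section
/- Let N ≥ 1 and let γ_k ∈ [0, 1] for k = 1, …, N with γ₁ = 1; define Γ₁ = 1 and Γ_k = (1 − γ_k)·Γ_{k−1} for k ≥ 2, and assume Γ_k > 0 for all k. Let δ ≥ 0, and for each k let c_k = β_k + η_k¹/T_k and d_k = (β_k + η_k^{T_k})/T_k be positive reals satisfying the chain condition (γ_k/Γ_k)·c_k ≤ (γ_{k−1}/Γ_{k−1})·d_{k−1} for all 2 ≤ k ≤ N. Let (Q_k)_{k=0}^N be reals with Q₀ arbitrary and let (B_k)_{k=0}^N be nonnegative reals such that for every k = 1, …, N: Q_k − (1 − γ_k)·Q_{k−1} ≤ γ_k·( c_k·B_{k−1} − d_k·B_k + δ ). Then Q_N ≤ Γ_N·c₁·B₀ − γ_N·d_N·B_N + δ·Γ_N·Σ_{k=1}^N (γ_k/Γ_k). -/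
open Finset

theorem mps_telescoping_deterministic
    (N : ℕ) (hN : 1 ≤ N)
    (γ Γ c d Q B : ℕ → ℝ) (δ : ℝ) (hδ : 0 ≤ δ)
    (hγmem : ∀ k ∈ Icc 1 N, γ k ∈ Set.Icc (0 : ℝ) 1)
    (hγ1 : γ 1 = 1)
    (hΓ1 : Γ 1 = 1)
    (hΓ : ∀ k ∈ Icc 2 N, Γ k = (1 - γ k) * Γ (k - 1))
    (hΓpos : ∀ k ∈ Icc 1 N, 0 < Γ k)
    (hc : ∀ k ∈ Icc 1 N, 0 < c k)
    (hd : ∀ k ∈ Icc 1 N, 0 < d k)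
    (hchain : ∀ k ∈ Icc 2 N, γ k / Γ k * c k ≤ γ (k - 1) / Γ (k - 1) * d (k - 1))
    (hB : ∀ k ∈ Icc 0 N, 0 ≤ B k)
    (hrec : ∀ k ∈ Icc 1 N,
      Q k - (1 - γ k) * Q (k - 1) ≤ γ k * (c k * B (k - 1) - d k * B k + δ)) :
    Q N ≤ Γ N * c 1 * B 0 - γ N * d N * B N
        + δ * Γ N * ∑ k ∈ Icc 1 N, γ k / Γ k := by
  have key : ∀ n, 1 ≤ n → n ≤ N →
      Q n / Γ n ≤ c 1 * B 0 - γ n / Γ n * (d n * B n)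
        + δ * ∑ k ∈ Icc 1 n, γ k / Γ k := by
    intro n hn
    induction n, hn using Nat.le_induction with
    | base =>
      intro h1
      have hr := hrec 1 (by simp [h1])
      rw [show Icc 1 1 = {1} from Finset.Icc_self 1, Finset.sum_singleton,
        hγ1, hΓ1]
      rw [hγ1] at hr
      norm_num at hr ⊢
      linarith
    | succ n hn ih =>
      intro hle
      have hnN : n ≤ N := le_trans (Nat.le_succ n) hle
      have ih' := ih hnN
      have hmem2 : n + 1 ∈ Icc 2 N := by simp; omega
      have hΓn1 := hΓ (n + 1) hmem2
      have hch := hchain (n + 1) hmem2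
      simp only [Nat.add_sub_cancel] at hΓn1 hch
      have hΓn : 0 < Γ n := hΓpos n (by simp; omega)
      have hΓn1p : 0 < Γ (n + 1) := hΓpos (n + 1) (by simp; omega)
      have h1γ : 0 < 1 - γ (n + 1) := by
        by_contra h
        push_neg at h
        nlinarith
      have hγpos : 0 ≤ γ (n + 1) := (hγmem (n + 1) (by simp; omega)).1
      have hBn : 0 ≤ B n := hB n (by simp [hnN])
      have hr := hrec (n + 1) (by simp; omega)
      simp only [Nat.add_sub_cancel] at hr
      -- divide the recursion by Γ (n+1)
      have step : Q (n + 1) / Γ (n + 1) ≤ Q n / Γ n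
          + γ (n + 1) / Γ (n + 1)
            * (c (n + 1) * B n - d (n + 1) * B (n + 1) + δ) := by
        have h1 : Q (n + 1) / Γ (n + 1)
            ≤ ((1 - γ (n + 1)) * Q n
                + γ (n + 1) * (c (n + 1) * B n - d (n + 1) * B (n + 1) + δ))
              / Γ (n + 1) := by
          apply div_le_div_of_nonneg_right _ hΓn1p.le
          linarith
        have h2 : ((1 - γ (n + 1)) * Q n
                + γ (n + 1) * (c (n + 1) * B n - d (n + 1) * B (n + 1) + δ))
              / Γ (n + 1)
            = Q n / Γ n + γ (n + 1) / Γ (n + 1)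
                * (c (n + 1) * B n - d (n + 1) * B (n + 1) + δ) := by
          rw [hΓn1]
          field_simp
        linarith [h1, h2.le, h2.ge]
      -- chain condition multiplied by B n
      have hchB : γ (n + 1) / Γ (n + 1) * c (n + 1) * B n
          ≤ γ n / Γ n * d n * B n :=
        mul_le_mul_of_nonneg_right hch hBn
      have hsum : ∑ k ∈ Icc 1 (n + 1), γ k / Γ k
          = (∑ k ∈ Icc 1 n, γ k / Γ k) + γ (n + 1) / Γ (n + 1) := by
        rw [← Finset.Ico_add_one_right_eq_Icc, Finset.sum_Ico_succ_top (by omega),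
          Finset.Ico_add_one_right_eq_Icc]
      rw [hsum]
      nlinarith [step, ih', hchB]
  have hkey := key N hN le_rfl
  have hΓN : 0 < Γ N := hΓpos N (by simp [hN])
  have e1 : Γ N * (γ N / Γ N * (d N * B N)) = γ N * d N * B N := by
    field_simp
  have hQN : Q N = Γ N * (Q N / Γ N) := by
    field_simp
  calc Q N = Γ N * (Q N / Γ N) := hQN
    _ ≤ Γ N * (c 1 * B 0 - γ N / Γ N * (d N * B N)
          + δ * ∑ k ∈ Icc 1 N, γ k / Γ k) :=
        mul_le_mul_of_nonneg_left hkey hΓN.le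
    _ = Γ N * c 1 * B 0 - Γ N * (γ N / Γ N * (d N * B N))
          + δ * Γ N * ∑ k ∈ Icc 1 N, γ k / Γ k := by ring
    _ = _ := by rw [e1]
end

section
/- Let E be a real inner product space, Z ⊆ E nonempty, H : Z → E monotone on Z and satisfying the (M, δ)-condition on Z (M > 0, δ ≥ 0), and V a Bregman-type distance on Z. Let a, b, z̃, c, z ∈ Z, Δ¹, Δ² ∈ E, g ∈ E, and β, η > 0 with M ≤ η and 2M ≤ β + η. Assume the stochastic prox inequality ⟨g, z̃ − z⟩ + ⟨H(z̃) + Δ², c − z⟩ + ⟨H(b) + Δ¹, z̃ − c⟩ ≤ β·(V(a, z) − V(c, z) − V(a, z̃) − V(z̃, c)) + η·(V(b, z) − V(c, z) − V(b, z̃) − V(z̃, c)). Then ⟨g + H(z), z̃ − z⟩ ≤ β·V(a, z) − β·V(a, z̃) + η·V(b, z) − (β + η)·V(c, z) + (1/M)·(‖Δ¹‖² + ‖Δ²‖²) − ⟨Δ², z̃ − z⟩ + δ. -/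
open RealInnerProductSpace

set_option maxHeartbeats 1000000

theorem smps_per_step_estimate
    {E : Type*} [NormedAddCommGroup E] [InnerProductSpace ℝ E]
    (Z : Set E) (hZne : Z.Nonempty)
    (H : E → E) (M δ : ℝ) (hM : 0 < M) (hδ : 0 ≤ δ)
    (hmono : ∀ u ∈ Z, ∀ v ∈ Z, 0 ≤ ⟪H u - H v, u - v⟫)
    (hMδ : ∀ z₁ ∈ Z, ∀ z₂ ∈ Z, ∀ z₃ ∈ Z,
      ⟪H z₁ - H z₂, z₁ - z₃⟫ ≤ M / 2 * ‖z₁ - z₂‖ ^ 2 + M / 2 * ‖z₁ - z₃‖ ^ 2 + δ)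
    (V : E → E → ℝ)
    (hVlb : ∀ u ∈ Z, ∀ w ∈ Z, 1 / 2 * ‖u - w‖ ^ 2 ≤ V u w)
    (hVzero : ∀ u ∈ Z, V u u = 0)
    (hVconv : ∀ u ∈ Z, ConvexOn ℝ Z (V u))
    (a b zt c z : E) (ha : a ∈ Z) (hb : b ∈ Z) (hzt : zt ∈ Z) (hc : c ∈ Z) (hz : z ∈ Z)
    (Δ₁ Δ₂ g : E)
    (β η : ℝ) (hβ : 0 < β) (hη : 0 < η) (hMη : M ≤ η) (hMβη : 2 * M ≤ β + η)
    (hprox : ⟪g, zt - z⟫ + ⟪H zt + Δ₂, c - z⟫ + ⟪H b + Δ₁, zt - c⟫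
      ≤ β * (V a z - V c z - V a zt - V zt c)
        + η * (V b z - V c z - V b zt - V zt c)) :
    ⟪g + H z, zt - z⟫
      ≤ β * V a z - β * V a zt + η * V b z - (β + η) * V c z
        + 1 / M * (‖Δ₁‖ ^ 2 + ‖Δ₂‖ ^ 2) - ⟪Δ₂, zt - z⟫ + δ := by
  have key : ⟪g + H z, zt - z⟫
      = ⟪g, zt - z⟫ + ⟪H zt + Δ₂, c - z⟫ + ⟪H b + Δ₁, zt - c⟫
        + ⟪H zt - H b, zt - c⟫ + ⟪Δ₂, zt - c⟫ - ⟪Δ₁, zt - c⟫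
        - ⟪Δ₂, zt - z⟫ - ⟪H z - H zt, z - zt⟫ := by
    simp only [inner_add_left, inner_sub_left, inner_sub_right]
    ring
  have h1 : (0:ℝ) ≤ ⟪H z - H zt, z - zt⟫ := hmono z hz zt hzt
  have h2 : ⟪H zt - H b, zt - c⟫
      ≤ M / 2 * ‖zt - b‖ ^ 2 + M / 2 * ‖zt - c‖ ^ 2 + δ := hMδ zt hzt b hb c hc
  have young : ∀ Δ : E, ⟪Δ, zt - c⟫ ≤ 1 / M * ‖Δ‖ ^ 2 + M / 4 * ‖zt - c‖ ^ 2 := by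
    intro Δ
    have hx : ⟪Δ, zt - c⟫ ≤ ‖Δ‖ * ‖zt - c‖ := real_inner_le_norm Δ (zt - c)
    have hy : M * (‖Δ‖ * ‖zt - c‖) ≤ ‖Δ‖ ^ 2 + M ^ 2 / 4 * ‖zt - c‖ ^ 2 := by
      nlinarith [sq_nonneg (‖Δ‖ - M / 2 * ‖zt - c‖)]
    have hz' : ‖Δ‖ * ‖zt - c‖ ≤ 1 / M * ‖Δ‖ ^ 2 + M / 4 * ‖zt - c‖ ^ 2 := by
      rw [← mul_le_mul_iff_right₀ hM]
      calc M * (‖Δ‖ * ‖zt - c‖) ≤ ‖Δ‖ ^ 2 + M ^ 2 / 4 * ‖zt - c‖ ^ 2 := hy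
        _ = M * (1 / M * ‖Δ‖ ^ 2 + M / 4 * ‖zt - c‖ ^ 2) := by
            field_simp
    linarith
  have y1 := young Δ₁
  have y1' : -⟪Δ₁, zt - c⟫ ≤ 1 / M * ‖Δ₁‖ ^ 2 + M / 4 * ‖zt - c‖ ^ 2 := by
    have := young (-Δ₁)
    simpa [inner_neg_left] using this
  have y2 := young Δ₂
  have vb : 1 / 2 * ‖b - zt‖ ^ 2 ≤ V b zt := hVlb b hb zt hzt
  have vzc : 1 / 2 * ‖zt - c‖ ^ 2 ≤ V zt c := hVlb zt hzt c hc
  have hnb : ‖zt - b‖ = ‖b - zt‖ := norm_sub_rev _ _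
  have habs1 : M / 2 * ‖b - zt‖ ^ 2 ≤ η * V b zt := by
    have h4 : 0 ≤ (η - M) * ‖b - zt‖ ^ 2 :=
      mul_nonneg (by linarith) (sq_nonneg _)
    have h3 := mul_le_mul_of_nonneg_left vb hη.le
    nlinarith
  have habs2 : M * ‖zt - c‖ ^ 2 ≤ (β + η) * V zt c := by
    have h4 : 0 ≤ (β + η - 2 * M) * ‖zt - c‖ ^ 2 :=
      mul_nonneg (by linarith) (sq_nonneg _)
    have h3 := mul_le_mul_of_nonneg_left vzc (by linarith : (0:ℝ) ≤ β + η)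
    nlinarith
  rw [key]
  rw [hnb] at h2
  linarith [hprox]
end

section
/- Let E be a real inner product space, Z ⊆ E a nonempty convex set, and V a Bregman-type distance on Z. Let M > 0, δ ≥ 0, T ≥ 1 an integer, β > 0, η¹, …, η^T > 0 with η^t ≤ β + η^{t−1} for 2 ≤ t ≤ T and 2M ≤ β + η^t for all t. Let a, w₋ ∈ Z, z⁰ = a, w⁰ = w₋, and for t = 1, …, T let z^t, z̃^t, w^t, w̃^t ∈ Z and Δ^{2t−1}, Δ^{2t} ∈ E, together with g ∈ E and a comparison point z ∈ Z, satisfy: (i) ⟨g + H(z), z̃^t − z⟩ ≤ β·V(a, z) − β·V(a, z̃^t) + η^t·V(z^{t−1}, z) − (β + η^t)·V(z^t, z) + (1/M)·(‖Δ^{2t−1}‖² + ‖Δ^{2t}‖²) − ⟨Δ^{2t}, z̃^t − z⟩ + δ; (ii) −⟨Δ^{2t}, w^t − z⟩ ≤ β·(V(w₋, z) − V(w₋, w^t) − V(w^t, z)) + η^t·(V(w^{t−1}, z) − V(w^{t−1}, w^t) − V(w^t, z)); (iii) −⟨Δ^{2t}, w̃^t − w^t⟩ ≤ ‖Δ^{2t}‖²/(2(β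 + η^t)) + β·V(w₋, w^t) + η^t·V(w^{t−1}, w^t). Set z̃ = (1/T)·Σ_{t=1}^T z̃^t. Then ⟨g + H(z), z̃ − z⟩ ≤ −β·V(a, z̃) + (β + η¹/T)·(V(a, z) + V(w₋, z)) − ((β + η^T)/T)·(V(z^T, z) + V(w^T, z)) + (1/T)·Σ_{t=1}^T (1/(2M))·(2‖Δ^{2t−1}‖² + 3‖Δ^{2t}‖²) − (1/T)·Σ_{t=1}^T ⟨Δ^{2t}, z̃^t − w̃^t⟩ + δ. -/
open RealInnerProductSpace Finset

private lemma telescope_aux (β : ℝ) (η f : ℕ → ℝ) (T : ℕ) (hT : 1 ≤ T)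
    (hchain : ∀ t ∈ Icc 2 T, η t ≤ β + η (t - 1))
    (hf : ∀ t ∈ Icc 1 T, 0 ≤ f t) :
    ∑ t ∈ Icc 1 T, (η t * f (t - 1) - (β + η t) * f t)
      ≤ η 1 * f 0 - (β + η T) * f T := by
  induction T with
  | zero => omega
  | succ n ih =>
    rcases Nat.lt_or_ge 1 (n + 1) with h1 | h1
    · have hn : 1 ≤ n := by omega
      have hsum : ∑ t ∈ Icc 1 (n + 1), (η t * f (t - 1) - (β + η t) * f t)
          = (∑ t ∈ Icc 1 n, (η t * f (t - 1) - (β + η t) * f t))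
            + (η (n + 1) * f n - (β + η (n + 1)) * f (n + 1)) := by
        rw [Finset.sum_Icc_succ_top (by omega)]
        norm_num
      have ihh := ih hn (fun t ht => hchain t (by simp at ht ⊢; omega))
        (fun t ht => hf t (by simp at ht ⊢; omega))
      have hc := hchain (n + 1) (by simp; omega)
      simp only [Nat.add_sub_cancel] at hc
      have hfn := hf n (by simp; omega)
      nlinarith [mul_le_mul_of_nonneg_right hc hfn]
    · have hn0 : n = 0 := by omega
      subst hn0
      simp

theorem smps_inner_loop_estimate
    {E : Type*} [NormedAddCommGroup E] [InnerProductSpace ℝ E]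
    (Z : Set E) (hZne : Z.Nonempty) (hZconv : Convex ℝ Z)
    (V : E → E → ℝ)
    (hVlb : ∀ u ∈ Z, ∀ w ∈ Z, 1 / 2 * ‖u - w‖ ^ 2 ≤ V u w)
    (hVzero : ∀ u ∈ Z, V u u = 0)
    (hVconv : ∀ u ∈ Z, ConvexOn ℝ Z (V u))
    (H : E → E)
    (M δ : ℝ) (hM : 0 < M) (hδ : 0 ≤ δ)
    (T : ℕ) (hT : 1 ≤ T)
    (β : ℝ) (hβ : 0 < β)
    (η : ℕ → ℝ) (hηpos : ∀ t ∈ Icc 1 T, 0 < η t)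
    (hηchain : ∀ t ∈ Icc 2 T, η t ≤ β + η (t - 1))
    (hMβη : ∀ t ∈ Icc 1 T, 2 * M ≤ β + η t)
    (a wm : E) (ha : a ∈ Z) (hwm : wm ∈ Z)
    (zs zts ws wts : ℕ → E) (Δ : ℕ → E)
    (hz0 : zs 0 = a) (hw0 : ws 0 = wm)
    (hzsZ : ∀ t ∈ Icc 1 T, zs t ∈ Z) (hztsZ : ∀ t ∈ Icc 1 T, zts t ∈ Z)
    (hwsZ : ∀ t ∈ Icc 1 T, ws t ∈ Z) (hwtsZ : ∀ t ∈ Icc 1 T, wts t ∈ Z)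
    (g : E) (z : E) (hz : z ∈ Z)
    (hyp1 : ∀ t ∈ Icc 1 T,
      ⟪g + H z, zts t - z⟫
        ≤ β * V a z - β * V a (zts t) + η t * V (zs (t - 1)) z
          - (β + η t) * V (zs t) z
          + 1 / M * (‖Δ (2 * t - 1)‖ ^ 2 + ‖Δ (2 * t)‖ ^ 2)
          - ⟪Δ (2 * t), zts t - z⟫ + δ)
    (hyp2 : ∀ t ∈ Icc 1 T,
      -⟪Δ (2 * t), ws t - z⟫
        ≤ β * (V wm z - V wm (ws t) - V (ws t) z)
          + η t * (V (ws (t - 1)) z - V (ws (t - 1)) (ws t) - V (ws t) z))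
    (hyp3 : ∀ t ∈ Icc 1 T,
      -⟪Δ (2 * t), wts t - ws t⟫
        ≤ ‖Δ (2 * t)‖ ^ 2 / (2 * (β + η t)) + β * V wm (ws t)
          + η t * V (ws (t - 1)) (ws t))
    (ztavg : E) (havg : ztavg = (T : ℝ)⁻¹ • ∑ t ∈ Icc 1 T, zts t) :
    ⟪g + H z, ztavg - z⟫
      ≤ -β * V a ztavg + (β + η 1 / T) * (V a z + V wm z)
        - (β + η T) / T * (V (zs T) z + V (ws T) z)
        + (T : ℝ)⁻¹ * ∑ t ∈ Icc 1 T,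
            1 / (2 * M) * (2 * ‖Δ (2 * t - 1)‖ ^ 2 + 3 * ‖Δ (2 * t)‖ ^ 2)
        - (T : ℝ)⁻¹ * ∑ t ∈ Icc 1 T, ⟪Δ (2 * t), zts t - wts t⟫ + δ := by
  have hTpos : (0 : ℝ) < T := by exact_mod_cast hT
  have hT0 : (T : ℝ) ≠ 0 := ne_of_gt hTpos
  have hVnn : ∀ u ∈ Z, ∀ w ∈ Z, 0 ≤ V u w := fun u hu w hw =>
    le_trans (by positivity) (hVlb u hu w hw)
  -- per-step key inequality
  have key : ∀ t ∈ Icc 1 T,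
      ⟪g + H z, zts t - z⟫
        ≤ β * V a z + β * V wm z - β * V a (zts t)
          + (η t * V (zs (t - 1)) z - (β + η t) * V (zs t) z)
          + (η t * V (ws (t - 1)) z - (β + η t) * V (ws t) z)
          + 1 / (2 * M) * (2 * ‖Δ (2 * t - 1)‖ ^ 2 + 3 * ‖Δ (2 * t)‖ ^ 2)
          - ⟪Δ (2 * t), zts t - wts t⟫ + δ := by
    intro t ht
    have h1 := hyp1 t ht
    have h2 := hyp2 t ht
    have h3 := hyp3 t ht
    have hβη := hMβη t ht
    have hsplit : ⟪Δ (2 * t), zts t - z⟫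
        = ⟪Δ (2 * t), zts t - wts t⟫ + ⟪Δ (2 * t), wts t - ws t⟫
          + ⟪Δ (2 * t), ws t - z⟫ := by
      rw [← inner_add_right, ← inner_add_right]
      congr 1
      abel
    have hB : (0 : ℝ) ≤ ‖Δ (2 * t)‖ ^ 2 := sq_nonneg _
    have hA : (0 : ℝ) ≤ ‖Δ (2 * t - 1)‖ ^ 2 := sq_nonneg _
    have hdiv : ‖Δ (2 * t)‖ ^ 2 / (2 * (β + η t)) ≤ ‖Δ (2 * t)‖ ^ 2 / (4 * M) := by
      apply div_le_div_of_nonneg_left hB (by linarith) (by linarith)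
    have harith : 1 / (2 * M) * (2 * ‖Δ (2 * t - 1)‖ ^ 2 + 3 * ‖Δ (2 * t)‖ ^ 2)
        - (1 / M * (‖Δ (2 * t - 1)‖ ^ 2 + ‖Δ (2 * t)‖ ^ 2)
            + ‖Δ (2 * t)‖ ^ 2 / (4 * M))
        = ‖Δ (2 * t)‖ ^ 2 / (4 * M) := by
      field_simp
      ring
    have hq : (0 : ℝ) ≤ ‖Δ (2 * t)‖ ^ 2 / (4 * M) := by positivity
    linarith
  set S := ∑ t ∈ Icc 1 T, ⟪g + H z, zts t - z⟫ with hS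
  have hcard : (Icc 1 T).card = T := by
    rw [Nat.card_Icc]; omega
  -- telescoping
  have tel1 := telescope_aux β η (fun t => V (zs t) z) T hT hηchain
    (fun t ht => hVnn _ (hzsZ t ht) _ hz)
  have tel2 := telescope_aux β η (fun t => V (ws t) z) T hT hηchain
    (fun t ht => hVnn _ (hwsZ t ht) _ hz)
  simp only [hz0, hw0] at tel1 tel2
  -- Jensen
  have hmemZ : ∀ t ∈ Icc 1 T, zts t ∈ Z := hztsZ
  have hw1 : ∑ t ∈ Icc 1 T, (T : ℝ)⁻¹ = 1 := by
    rw [Finset.sum_const, hcard, nsmul_eq_mul, mul_inv_cancel₀ hT0]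
  have havg' : ztavg = ∑ t ∈ Icc 1 T, (T : ℝ)⁻¹ • zts t := by
    rw [havg, Finset.smul_sum]
  have jensen : V a ztavg ≤ ∑ t ∈ Icc 1 T, (T : ℝ)⁻¹ * V a (zts t) := by
    rw [havg']
    exact (hVconv a ha).map_sum_le (fun t _ => by positivity) hw1 hmemZ
  have jensen' : (T : ℝ) * V a ztavg ≤ ∑ t ∈ Icc 1 T, V a (zts t) := by
    have : ∑ t ∈ Icc 1 T, (T : ℝ)⁻¹ * V a (zts t)
        = (T : ℝ)⁻¹ * ∑ t ∈ Icc 1 T, V a (zts t) := by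
      rw [Finset.mul_sum]
    rw [this] at jensen
    calc (T : ℝ) * V a ztavg ≤ (T : ℝ) * ((T : ℝ)⁻¹ * ∑ t ∈ Icc 1 T, V a (zts t)) :=
          mul_le_mul_of_nonneg_left jensen hTpos.le
      _ = ∑ t ∈ Icc 1 T, V a (zts t) := by field_simp
  -- sum the key inequality
  have sum_key : S ≤ (T : ℝ) * (β * V a z) + (T : ℝ) * (β * V wm z)
      - β * ∑ t ∈ Icc 1 T, V a (zts t)
      + (η 1 * V a z - (β + η T) * V (zs T) z)
      + (η 1 * V wm z - (β + η T) * V (ws T) z)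
      + (∑ t ∈ Icc 1 T, 1 / (2 * M) * (2 * ‖Δ (2 * t - 1)‖ ^ 2 + 3 * ‖Δ (2 * t)‖ ^ 2))
      - (∑ t ∈ Icc 1 T, ⟪Δ (2 * t), zts t - wts t⟫) + (T : ℝ) * δ := by
    have h := Finset.sum_le_sum key
    rw [← hS] at h
    have hexp : ∑ t ∈ Icc 1 T,
        (β * V a z + β * V wm z - β * V a (zts t)
          + (η t * V (zs (t - 1)) z - (β + η t) * V (zs t) z)
          + (η t * V (ws (t - 1)) z - (β + η t) * V (ws t) z)
          + 1 / (2 * M) * (2 * ‖Δ (2 * t - 1)‖ ^ 2 + 3 * ‖Δ (2 * t)‖ ^ 2)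
          - ⟪Δ (2 * t), zts t - wts t⟫ + δ)
        = (T : ℝ) * (β * V a z) + (T : ℝ) * (β * V wm z)
          - β * ∑ t ∈ Icc 1 T, V a (zts t)
          + (∑ t ∈ Icc 1 T, (η t * V (zs (t - 1)) z - (β + η t) * V (zs t) z))
          + (∑ t ∈ Icc 1 T, (η t * V (ws (t - 1)) z - (β + η t) * V (ws t) z))
          + (∑ t ∈ Icc 1 T, 1 / (2 * M) * (2 * ‖Δ (2 * t - 1)‖ ^ 2 + 3 * ‖Δ (2 * t)‖ ^ 2))
          - (∑ t ∈ Icc 1 T, ⟪Δ (2 * t), zts t - wts t⟫) + (T : ℝ) * δ := by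
      simp only [Finset.sum_add_distrib, Finset.sum_sub_distrib, Finset.sum_const,
        hcard, nsmul_eq_mul, ← Finset.mul_sum]
      try ring
    rw [hexp] at h
    linarith [tel1, tel2]
  -- express the LHS as an average
  have hsumz : ∑ t ∈ Icc 1 T, (zts t - z) = (∑ t ∈ Icc 1 T, zts t) - (T : ℝ) • z := by
    rw [Finset.sum_sub_distrib, Finset.sum_const, hcard, ← Nat.cast_smul_eq_nsmul ℝ]
  have hlhs : ⟪g + H z, ztavg - z⟫ = (T : ℝ)⁻¹ * S := by
    have : ztavg - z = (T : ℝ)⁻¹ • ∑ t ∈ Icc 1 T, (zts t - z) := by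
      rw [hsumz, smul_sub, ← havg, smul_smul, inv_mul_cancel₀ hT0, one_smul]
    rw [this, real_inner_smul_right, inner_sum]
  rw [hlhs, inv_mul_le_iff₀ hTpos]
  have hβS : β * ((T : ℝ) * V a ztavg) ≤ β * ∑ t ∈ Icc 1 T, V a (zts t) :=
    mul_le_mul_of_nonneg_left jensen' hβ.le
  calc S ≤ (T : ℝ) * (β * V a z) + (T : ℝ) * (β * V wm z)
      - β * ((T : ℝ) * V a ztavg)
      + (η 1 * V a z - (β + η T) * V (zs T) z)
      + (η 1 * V wm z - (β + η T) * V (ws T) z)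
      + (∑ t ∈ Icc 1 T, 1 / (2 * M) * (2 * ‖Δ (2 * t - 1)‖ ^ 2 + 3 * ‖Δ (2 * t)‖ ^ 2))
      - (∑ t ∈ Icc 1 T, ⟪Δ (2 * t), zts t - wts t⟫) + (T : ℝ) * δ := by
        linarith [sum_key, hβS]
    _ = (T : ℝ) * (-β * V a ztavg + (β + η 1 / T) * (V a z + V wm z)
        - (β + η T) / T * (V (zs T) z + V (ws T) z)
        + (T : ℝ)⁻¹ * ∑ t ∈ Icc 1 T,
            1 / (2 * M) * (2 * ‖Δ (2 * t - 1)‖ ^ 2 + 3 * ‖Δ (2 * t)‖ ^ 2)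
        - (T : ℝ)⁻¹ * ∑ t ∈ Icc 1 T, ⟪Δ (2 * t), zts t - wts t⟫ + δ) := by
        field_simp
        ring
end

section
/- Let N ≥ 1 and let γ_k ∈ [0, 1] for k = 1, …, N with γ₁ = 1; define Γ₁ = 1 and Γ_k = (1 − γ_k)·Γ_{k−1} for k ≥ 2, and assume Γ_k > 0 for all k. For each k let c_k, d_k > 0 satisfy (γ_k/Γ_k)·c_k ≤ (γ_{k−1}/Γ_{k−1})·d_{k−1} for 2 ≤ k ≤ N, and let e_k be arbitrary reals. Let (Q_k)_{k=0}^N be reals and (B_k)_{k=0}^N nonnegative reals such that for every k = 1, …, N: Q_k − (1 − γ_k)·Q_{k−1} ≤ γ_k·( c_k·B_{k−1} − d_k·B_k + e_k ). Then Q_N ≤ Γ_N·c₁·B₀ + Γ_N·Σ_{k=1}^N (γ_k/Γ_k)·e_k. -/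
open Finset

theorem smps_telescoping_pathwise
    (N : ℕ) (hN : 1 ≤ N)
    (γ Γ c d e Q B : ℕ → ℝ)
    (hγmem : ∀ k ∈ Icc 1 N, γ k ∈ Set.Icc (0 : ℝ) 1)
    (hγ1 : γ 1 = 1)
    (hΓ1 : Γ 1 = 1)
    (hΓ : ∀ k ∈ Icc 2 N, Γ k = (1 - γ k) * Γ (k - 1))
    (hΓpos : ∀ k ∈ Icc 1 N, 0 < Γ k)
    (hc : ∀ k ∈ Icc 1 N, 0 < c k)
    (hd : ∀ k ∈ Icc 1 N, 0 < d k)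
    (hchain : ∀ k ∈ Icc 2 N, γ k / Γ k * c k ≤ γ (k - 1) / Γ (k - 1) * d (k - 1))
    (hB : ∀ k ∈ Icc 0 N, 0 ≤ B k)
    (hrec : ∀ k ∈ Icc 1 N,
      Q k - (1 - γ k) * Q (k - 1) ≤ γ k * (c k * B (k - 1) - d k * B k + e k)) :
    Q N ≤ Γ N * c 1 * B 0 + Γ N * ∑ k ∈ Icc 1 N, γ k / Γ k * e k := by
  -- Claim 1: Q n / Γ n ≤ ∑_{k=1}^n (γ_k/Γ_k)(c_k B_{k-1} - d_k B_k + e_k)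
  have key : ∀ n, 1 ≤ n → n ≤ N →
      Q n / Γ n ≤ ∑ k ∈ Icc 1 n, γ k / Γ k * (c k * B (k-1) - d k * B k + e k) := by
    intro n
    induction n with
    | zero => intro h; omega
    | succ m ih =>
      intro h1 hle
      by_cases hm : m = 0
      · subst hm
        have hr := hrec 1 (by simp [mem_Icc]; omega)
        rw [hγ1] at hr
        norm_num at hr
        simp [mem_Icc, hγ1, hΓ1]
        linarith
      · have hm1 : 1 ≤ m := by omega
        have hmN : m ≤ N := by omega
        have hΓeq : Γ (m+1) = (1 - γ (m+1)) * Γ m := by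
          have := hΓ (m+1) (by simp [mem_Icc]; omega)
          simpa using this
        have hΓm : 0 < Γ m := hΓpos m (by simp [mem_Icc]; omega)
        have hΓm1 : 0 < Γ (m+1) := hΓpos (m+1) (by simp [mem_Icc]; omega)
        have hg : 0 < 1 - γ (m+1) := by
          by_contra hcon
          push_neg at hcon
          nlinarith [hΓeq]
        have hr := hrec (m+1) (by simp [mem_Icc]; omega)
        simp only [Nat.add_sub_cancel] at hr
        set T := c (m+1) * B m - d (m+1) * B (m+1) + e (m+1) with hT
        have step1 : Q (m+1) / Γ (m+1) ≤ ((1 - γ (m+1)) * Q m + γ (m+1) * T) / Γ (m+1) := by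
          gcongr
          linarith
        have step2 : ((1 - γ (m+1)) * Q m + γ (m+1) * T) / Γ (m+1)
            = Q m / Γ m + γ (m+1) / Γ (m+1) * T := by
          rw [hΓeq]
          field_simp
        have ihm := ih hm1 hmN
        have hsum : ∑ k ∈ Icc 1 (m+1), γ k / Γ k * (c k * B (k-1) - d k * B k + e k)
            = (∑ k ∈ Icc 1 m, γ k / Γ k * (c k * B (k-1) - d k * B k + e k))
              + γ (m+1) / Γ (m+1) * T := by
          rw [Finset.sum_Icc_succ_top (by omega : 1 ≤ m+1)]
          simp [hT]
        rw [hsum]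
        calc Q (m+1) / Γ (m+1) ≤ Q m / Γ m + γ (m+1) / Γ (m+1) * T := by
              rw [← step2]; exact step1
          _ ≤ _ := by linarith
  -- Claim 2: the B-part telescopes
  have key2 : ∀ n, 1 ≤ n → n ≤ N →
      ∑ k ∈ Icc 1 n, γ k / Γ k * (c k * B (k-1) - d k * B k)
        ≤ c 1 * B 0 - γ n / Γ n * (d n * B n) := by
    intro n
    induction n with
    | zero => intro h; omega
    | succ m ih =>
      intro h1 hle
      by_cases hm : m = 0
      · subst hm
        simp [mem_Icc, hγ1, hΓ1]
      · have hm1 : 1 ≤ m := by omega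
        have hmN : m ≤ N := by omega
        have ihm := ih hm1 hmN
        rw [Finset.sum_Icc_succ_top (by omega : 1 ≤ m+1)]
        have hchain' := hchain (m+1) (by simp [mem_Icc]; omega)
        simp only [Nat.add_sub_cancel] at hchain'
        have hBm : 0 ≤ B m := hB m (by simp [mem_Icc]; omega)
        have hmul : γ (m+1) / Γ (m+1) * c (m+1) * B m ≤ γ m / Γ m * d m * B m := by
          apply mul_le_mul_of_nonneg_right hchain' hBm
        simp only [Nat.add_sub_cancel]
        nlinarith [ihm, hmul]
  have h1 := key N hN le_rfl
  have h2 := key2 N hN le_rfl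
  have hsplit : ∑ k ∈ Icc 1 N, γ k / Γ k * (c k * B (k-1) - d k * B k + e k)
      = (∑ k ∈ Icc 1 N, γ k / Γ k * (c k * B (k-1) - d k * B k))
        + ∑ k ∈ Icc 1 N, γ k / Γ k * e k := by
    rw [← Finset.sum_add_distrib]
    apply Finset.sum_congr rfl
    intros; ring
  have hΓN : 0 < Γ N := hΓpos N (by simp [mem_Icc]; omega)
  have hγN : 0 ≤ γ N := (hγmem N (by simp [mem_Icc]; omega)).1
  have hdN : 0 < d N := hd N (by simp [mem_Icc]; omega)
  have hBN : 0 ≤ B N := hB N (by simp [mem_Icc])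
  have hterm : 0 ≤ γ N / Γ N * (d N * B N) := by positivity
  have hfin : Q N / Γ N ≤ c 1 * B 0 + ∑ k ∈ Icc 1 N, γ k / Γ k * e k := by
    rw [hsplit] at h1
    linarith
  rw [div_le_iff₀ hΓN] at hfin
  nlinarith [hfin]
end

section
/- Let u : ℝⁿ → ℝ be convex on a convex set Q ⊆ ℝⁿ, let W be a real p×n matrix with W ≠ 0, and suppose x* ∈ Q satisfies W x* = 0 and y* ∈ ℝᵖ satisfies u(x*) ≤ u(x) + ⟨y*, W x⟩ for all x ∈ Q. Then: (a) −Wᵀ y* is a subgradient of u at x* relative to Q, i.e. u(x) ≥ u(x*) + ⟨−Wᵀ y*, x − x*⟩ for all x ∈ Q; and (b) the orthogonal projection ỹ of y* onto the range of W also satisfies u(x*) ≤ u(x) + ⟨ỹ, W x⟩ for all x ∈ Q, and ‖ỹ‖² ≤ ‖Wᵀ ỹ‖² / λ_min⁺(WᵀW). Consequently there exists a Lagrange multiplier ỹ with ‖ỹ‖² ≤ sup_{v ∈ ∂_Q u(x*)} ‖v‖² / λ_min⁺(WᵀW), where ∂_Q u(x*) is the set of subgradients of u at x* relative to Q (assuming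 this supremum is finite). -/
open RealInnerProductSpace Matrix

/-- The smallest positive eigenvalue of a square real matrix. -/
noncomputable def lambdaMinPos {n : ℕ} (A : Matrix (Fin n) (Fin n) ℝ) : ℝ :=
  sInf {μ : ℝ | 0 < μ ∧ ∃ v : Fin n → ℝ, v ≠ 0 ∧ A.mulVec v = μ • v}

variable {n p : ℕ}

lemma adj (W : Matrix (Fin p) (Fin n) ℝ) (y : EuclideanSpace ℝ (Fin p))
    (x : EuclideanSpace ℝ (Fin n)) :
    ⟪y, Matrix.toEuclideanLin W x⟫ = ⟪Matrix.toEuclideanLin Wᵀ y, x⟫ := by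
  rw [show Wᵀ = Wᴴ from (Matrix.conjTranspose_eq_transpose_of_trivial W).symm,
    Matrix.toEuclideanLin_conjTranspose_eq_adjoint, LinearMap.adjoint_inner_left]

lemma toEuclideanLin_mul' {m k l : ℕ} (A : Matrix (Fin m) (Fin k) ℝ)
    (B : Matrix (Fin k) (Fin l) ℝ) (x : EuclideanSpace ℝ (Fin l)) :
    Matrix.toEuclideanLin (A * B) x = Matrix.toEuclideanLin A (Matrix.toEuclideanLin B x) := by
  simp [Matrix.toEuclideanLin_apply, Matrix.mulVec_mulVec]

lemma eig_euclid {k : ℕ} {A : Matrix (Fin k) (Fin k) ℝ} (hA : A.IsHermitian) (j : Fin k) :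
    Matrix.toEuclideanLin A (hA.eigenvectorBasis j) =
      hA.eigenvalues j • hA.eigenvectorBasis j := by
  apply (WithLp.equiv 2 (Fin k → ℝ)).injective
  simpa [Matrix.toEuclideanLin_apply] using hA.mulVec_eigenvectorBasis j

lemma sym_inner {k : ℕ} {A : Matrix (Fin k) (Fin k) ℝ} (hA : A.IsHermitian)
    (x y : EuclideanSpace ℝ (Fin k)) :
    ⟪x, Matrix.toEuclideanLin A y⟫ = ⟪Matrix.toEuclideanLin A x, y⟫ := by
  rw [adj, show Aᵀ = A from (Matrix.conjTranspose_eq_transpose_of_trivial A).symm.trans hA]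

lemma eset_subset {k : ℕ} {A : Matrix (Fin k) (Fin k) ℝ} (hA : A.IsHermitian) :
    {μ : ℝ | 0 < μ ∧ ∃ v : Fin k → ℝ, v ≠ 0 ∧ A.mulVec v = μ • v}
      ⊆ Set.range hA.eigenvalues := by
  rintro μ ⟨hμ, v, hv, hAv⟩
  by_contra hμr
  set vE : EuclideanSpace ℝ (Fin k) := (WithLp.equiv 2 (Fin k → ℝ)).symm v with hvE
  have hAvE : Matrix.toEuclideanLin A vE = μ • vE := by
    apply (WithLp.equiv 2 (Fin k → ℝ)).injective
    simpa [Matrix.toEuclideanLin_apply, hvE] using hAv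
  have hi : ∀ i, ⟪hA.eigenvectorBasis i, vE⟫ = 0 := by
    intro i
    have h1 : μ * ⟪hA.eigenvectorBasis i, vE⟫ = hA.eigenvalues i * ⟪hA.eigenvectorBasis i, vE⟫ := by
      calc μ * ⟪hA.eigenvectorBasis i, vE⟫ = ⟪hA.eigenvectorBasis i, μ • vE⟫ := by
            rw [real_inner_smul_right]
        _ = ⟪hA.eigenvectorBasis i, Matrix.toEuclideanLin A vE⟫ := by rw [hAvE]
        _ = ⟪Matrix.toEuclideanLin A (hA.eigenvectorBasis i), vE⟫ := sym_inner hA _ _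
        _ = ⟪hA.eigenvalues i • hA.eigenvectorBasis i, vE⟫ := by rw [eig_euclid hA i]
        _ = hA.eigenvalues i * ⟪hA.eigenvectorBasis i, vE⟫ := real_inner_smul_left _ _ _
    rcases mul_eq_mul_right_iff.mp h1 with h | h
    · exact absurd ⟨i, h.symm⟩ hμr
    · exact h
  have hvE0 : vE = 0 := by
    rw [← (hA.eigenvectorBasis).sum_repr' vE]
    simp [hi]
  exact hv (by simpa [hvE] using congrArg (WithLp.equiv 2 (Fin k → ℝ)) hvE0)

lemma eset_nonempty (W : Matrix (Fin p) (Fin n) ℝ) (hW : W ≠ 0) :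
    {μ : ℝ | 0 < μ ∧ ∃ v : Fin n → ℝ, v ≠ 0 ∧ (Wᵀ * W).mulVec v = μ • v}.Nonempty := by
  have hT : Wᵀ = Wᴴ := (Matrix.conjTranspose_eq_transpose_of_trivial W).symm
  have hA : (Wᵀ * W).IsHermitian := by rw [hT]; exact Matrix.isHermitian_conjTranspose_mul_self W
  have hP : (Wᵀ * W).PosSemidef := by rw [hT]; exact Matrix.posSemidef_conjTranspose_mul_self W
  have hAne : Wᵀ * W ≠ 0 := by
    rw [hT, Ne, Matrix.conjTranspose_mul_self_eq_zero]; exact hW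
  obtain ⟨v, t, ht, hv, hAv⟩ := hA.exists_eigenvector_of_ne_zero hAne
  refine ⟨t, ?_, v, hv, hAv⟩
  have h1 : (0:ℝ) ≤ dotProduct (star v) ((Wᵀ * W) *ᵥ v) := hP.dotProduct_mulVec_nonneg v
  rw [hAv] at h1
  have h2 : dotProduct (star v) (t • v) = t * dotProduct v v := by
    simp [dotProduct_smul, star_trivial, smul_eq_mul, mul_comm]
  rw [h2] at h1
  have h3 : 0 < dotProduct v v := by
    have hnn : (0:ℝ) ≤ dotProduct v v := by
      simpa using dotProduct_self_star_nonneg v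
    rcases lt_or_eq_of_le hnn with h | h
    · exact h
    · exact absurd (dotProduct_self_eq_zero.mp h.symm) hv
  rcases ht.lt_or_gt with h | h
  · nlinarith
  · exact h

lemma lambdaMinPos_mem (W : Matrix (Fin p) (Fin n) ℝ) (hW : W ≠ 0) :
    lambdaMinPos (Wᵀ * W) ∈
      {μ : ℝ | 0 < μ ∧ ∃ v : Fin n → ℝ, v ≠ 0 ∧ (Wᵀ * W).mulVec v = μ • v} := by
  have hT : Wᵀ = Wᴴ := (Matrix.conjTranspose_eq_transpose_of_trivial W).symm
  have hA : (Wᵀ * W).IsHermitian := by rw [hT]; exact Matrix.isHermitian_conjTranspose_mul_self W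
  exact (eset_nonempty W hW).csInf_mem
    (Set.Finite.subset (Set.finite_range hA.eigenvalues) (eset_subset hA))

lemma lambdaMinPos_pos (W : Matrix (Fin p) (Fin n) ℝ) (hW : W ≠ 0) :
    0 < lambdaMinPos (Wᵀ * W) :=
  (lambdaMinPos_mem W hW).1

lemma key_ineq (W : Matrix (Fin p) (Fin n) ℝ) (hW : W ≠ 0)
    (y : EuclideanSpace ℝ (Fin p)) (hy : y ∈ LinearMap.range (Matrix.toEuclideanLin W)) :
    lambdaMinPos (Wᵀ * W) * ‖y‖ ^ 2 ≤ ‖Matrix.toEuclideanLin Wᵀ y‖ ^ 2 := by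
  classical
  obtain ⟨z, hz⟩ := hy
  have hT : Wᵀ = Wᴴ := (Matrix.conjTranspose_eq_transpose_of_trivial W).symm
  have hB : (W * Wᵀ).IsHermitian := by rw [hT]; exact Matrix.isHermitian_mul_conjTranspose_self W
  set b := hB.eigenvectorBasis with hb
  set ν := hB.eigenvalues with hνdef
  set c : Fin p → ℝ := fun i => ⟪b i, y⟫ with hc
  have hν : ∀ i, ν i = ‖Matrix.toEuclideanLin Wᵀ (b i)‖ ^ 2 := by
    intro i
    have h1 : ⟪b i, Matrix.toEuclideanLin (W * Wᵀ) (b i)⟫ = ν i := by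
      rw [eig_euclid hB i, real_inner_smul_right, real_inner_self_eq_norm_sq,
        b.orthonormal.1 i]
      ring
    have h2 : ⟪b i, Matrix.toEuclideanLin (W * Wᵀ) (b i)⟫
        = ‖Matrix.toEuclideanLin Wᵀ (b i)‖ ^ 2 := by
      rw [toEuclideanLin_mul', adj, real_inner_self_eq_norm_sq]
    rw [← h1, h2]
  have hkey : ∀ i, lambdaMinPos (Wᵀ * W) * c i ^ 2 ≤ ν i * c i ^ 2 := by
    intro i
    rcases eq_or_ne (c i) 0 with h0 | h0
    · simp [h0]
    have hν0 : ν i ≠ 0 := by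
      intro h
      have hL0 : Matrix.toEuclideanLin Wᵀ (b i) = 0 := by
        have h3 := (hν i).symm
        rw [h] at h3
        exact norm_eq_zero.mp (sq_eq_zero_iff.mp h3)
      apply h0
      rw [hc]
      simp only
      rw [← hz, adj, hL0, inner_zero_left]
    have hνpos : 0 < ν i := lt_of_le_of_ne (by rw [hν i]; positivity) (Ne.symm hν0)
    have hw0 : Matrix.toEuclideanLin Wᵀ (b i) ≠ 0 := by
      intro h
      apply hν0
      rw [hν i, h, norm_zero]
      ring
    have heig : Matrix.toEuclideanLin (Wᵀ * W) (Matrix.toEuclideanLin Wᵀ (b i))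
        = ν i • Matrix.toEuclideanLin Wᵀ (b i) := by
      rw [toEuclideanLin_mul', ← toEuclideanLin_mul' W Wᵀ, eig_euclid hB i, _root_.map_smul]
    have hmem : ν i ∈ {μ : ℝ | 0 < μ ∧ ∃ v : Fin n → ℝ, v ≠ 0 ∧ (Wᵀ * W).mulVec v = μ • v} := by
      refine ⟨hνpos, WithLp.equiv 2 (Fin n → ℝ) (Matrix.toEuclideanLin Wᵀ (b i)), ?_, ?_⟩
      · intro h
        exact hw0 ((WithLp.equiv 2 (Fin n → ℝ)).injective (by simpa using h))
      · have h4 := congrArg (WithLp.equiv 2 (Fin n → ℝ)) heig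
        simp only [WithLp.equiv_apply, ofLp_toEuclideanLin_apply, Matrix.mulVec_mulVec] at h4
        simpa [Matrix.mulVec_mulVec] using h4
    have hle : lambdaMinPos (Wᵀ * W) ≤ ν i :=
      csInf_le ⟨0, fun μ hμ => hμ.1.le⟩ hmem
    exact mul_le_mul_of_nonneg_right hle (sq_nonneg _)
  have hysum : y = ∑ i, c i • b i := (b.sum_repr' y).symm
  have hnorm : ‖y‖ ^ 2 = ∑ i, c i ^ 2 := by
    rw [← real_inner_self_eq_norm_sq]
    nth_rewrite 1 [hysum]
    rw [sum_inner]
    simp_rw [real_inner_smul_left]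
    exact Finset.sum_congr rfl fun i _ => by
      rw [show (inner ℝ (b i) y : ℝ) = c i from rfl]; ring
  have hWnorm : ‖Matrix.toEuclideanLin Wᵀ y‖ ^ 2 = ∑ i, ν i * c i ^ 2 := by
    have hBy : Matrix.toEuclideanLin (W * Wᵀ) y = ∑ i, (ν i * c i) • b i := by
      nth_rewrite 1 [hysum]
      rw [map_sum]
      exact Finset.sum_congr rfl fun i _ => by
        rw [_root_.map_smul, eig_euclid hB i, smul_smul, mul_comm]
    calc ‖Matrix.toEuclideanLin Wᵀ y‖ ^ 2
        = ⟪Matrix.toEuclideanLin Wᵀ y, Matrix.toEuclideanLin Wᵀ y⟫ :=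
          (real_inner_self_eq_norm_sq _).symm
      _ = ⟪y, Matrix.toEuclideanLin W (Matrix.toEuclideanLin Wᵀ y)⟫ := (adj W y _).symm
      _ = ⟪y, Matrix.toEuclideanLin (W * Wᵀ) y⟫ := by rw [toEuclideanLin_mul']
      _ = ∑ i, ν i * c i ^ 2 := by
          rw [hBy, inner_sum]
          simp_rw [real_inner_smul_right]
          exact Finset.sum_congr rfl fun i _ => by
            rw [real_inner_comm, show (inner ℝ (b i) y : ℝ) = c i from rfl]; ring
  rw [hnorm, hWnorm, Finset.mul_sum]
  exact Finset.sum_le_sum fun i _ => hkey i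


theorem penalty_lemma_statement_two
    {n p : ℕ}
    (Q : Set (EuclideanSpace ℝ (Fin n))) (hQ : Convex ℝ Q)
    (u : EuclideanSpace ℝ (Fin n) → ℝ) (hu : ConvexOn ℝ Q u)
    (W : Matrix (Fin p) (Fin n) ℝ) (hW : W ≠ 0)
    (xs : EuclideanSpace ℝ (Fin n)) (hxs : xs ∈ Q)
    (hWxs : Matrix.toEuclideanLin W xs = 0)
    (ys : EuclideanSpace ℝ (Fin p))
    (hys : ∀ x ∈ Q, u xs ≤ u x + ⟪ys, Matrix.toEuclideanLin W x⟫)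
    (S : Set (EuclideanSpace ℝ (Fin n)))
    (hS : S = {g | ∀ x ∈ Q, u xs + ⟪g, x - xs⟫ ≤ u x})
    (hbdd : BddAbove ((fun g => ‖g‖ ^ 2) '' S)) :
    (∀ x ∈ Q, u xs + ⟪-(Matrix.toEuclideanLin Wᵀ ys), x - xs⟫ ≤ u x)
    ∧ ((∀ x ∈ Q, u xs ≤ u x
          + ⟪(Submodule.orthogonalProjectionOnto (LinearMap.range (Matrix.toEuclideanLin W)) ys :
              EuclideanSpace ℝ (Fin p)), Matrix.toEuclideanLin W x⟫)
        ∧ ‖(Submodule.orthogonalProjectionOnto (LinearMap.range (Matrix.toEuclideanLin W)) ys :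
              EuclideanSpace ℝ (Fin p))‖ ^ 2
            ≤ ‖Matrix.toEuclideanLin Wᵀ
                  (Submodule.orthogonalProjectionOnto (LinearMap.range (Matrix.toEuclideanLin W)) ys :
                    EuclideanSpace ℝ (Fin p))‖ ^ 2 / lambdaMinPos (Wᵀ * W))
    ∧ ∃ yt : EuclideanSpace ℝ (Fin p),
        (∀ x ∈ Q, u xs ≤ u x + ⟪yt, Matrix.toEuclideanLin W x⟫)
        ∧ ‖yt‖ ^ 2 ≤ sSup ((fun g => ‖g‖ ^ 2) '' S) / lambdaMinPos (Wᵀ * W) := by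
  classical
  have hlam : 0 < lambdaMinPos (Wᵀ * W) := lambdaMinPos_pos W hW
  have hLtxs : ∀ y : EuclideanSpace ℝ (Fin p), ⟪Matrix.toEuclideanLin Wᵀ y, xs⟫ = 0 := by
    intro y
    rw [← adj, hWxs, inner_zero_right]
  set yt : EuclideanSpace ℝ (Fin p) :=
    (Submodule.orthogonalProjectionOnto (LinearMap.range (Matrix.toEuclideanLin W)) ys :
      EuclideanSpace ℝ (Fin p)) with hyt
  have hytmem : yt ∈ LinearMap.range (Matrix.toEuclideanLin W) :=
    (Submodule.orthogonalProjectionOnto (LinearMap.range (Matrix.toEuclideanLin W)) ys).2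
  have hproj : ∀ x : EuclideanSpace ℝ (Fin n),
      ⟪yt, Matrix.toEuclideanLin W x⟫ = ⟪ys, Matrix.toEuclideanLin W x⟫ := by
    intro x
    have h1 : ys - yt ∈ (LinearMap.range (Matrix.toEuclideanLin W))ᗮ :=
      Submodule.sub_starProjection_mem_orthogonal ys
    have h2 : ⟪Matrix.toEuclideanLin W x, ys - yt⟫ = 0 :=
      (Submodule.mem_orthogonal _ _).mp h1 _ (LinearMap.mem_range_self _ x)
    rw [inner_sub_right] at h2
    have h3 := real_inner_comm ((Matrix.toEuclideanLin W) x) yt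
    have h4 := real_inner_comm ((Matrix.toEuclideanLin W) x) ys
    linarith
  have part1 : ∀ x ∈ Q, u xs + ⟪-(Matrix.toEuclideanLin Wᵀ ys), x - xs⟫ ≤ u x := by
    intro x hx
    have h1 := hys x hx
    rw [adj] at h1
    have h2 : ⟪-(Matrix.toEuclideanLin Wᵀ ys), x - xs⟫ = -⟪Matrix.toEuclideanLin Wᵀ ys, x⟫ := by
      rw [inner_neg_left, inner_sub_right, hLtxs ys]; ring
    rw [h2]; linarith
  have part2a : ∀ x ∈ Q, u xs ≤ u x + ⟪yt, Matrix.toEuclideanLin W x⟫ := by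
    intro x hx
    rw [hproj x]
    exact hys x hx
  have part2b : ‖yt‖ ^ 2 ≤ ‖Matrix.toEuclideanLin Wᵀ yt‖ ^ 2 / lambdaMinPos (Wᵀ * W) := by
    rw [le_div_iff₀ hlam, mul_comm]
    exact key_ineq W hW yt hytmem
  refine ⟨part1, ⟨part2a, part2b⟩, yt, part2a, ?_⟩
  have hmemS : -(Matrix.toEuclideanLin Wᵀ yt) ∈ S := by
    rw [hS]
    intro x hx
    have h1 := part2a x hx
    rw [adj] at h1
    have h2 : ⟪-(Matrix.toEuclideanLin Wᵀ yt), x - xs⟫ = -⟪Matrix.toEuclideanLin Wᵀ yt, x⟫ := by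
      rw [inner_neg_left, inner_sub_right, hLtxs yt]; ring
    rw [h2]; linarith
  have hsup : ‖Matrix.toEuclideanLin Wᵀ yt‖ ^ 2 ≤ sSup ((fun g => ‖g‖ ^ 2) '' S) := by
    have h3 : ‖-(Matrix.toEuclideanLin Wᵀ yt)‖ ^ 2 ∈ (fun g => ‖g‖ ^ 2) '' S :=
      ⟨_, hmemS, rfl⟩
    rw [norm_neg] at h3
    exact le_csSup hbdd h3
  calc ‖yt‖ ^ 2 ≤ ‖Matrix.toEuclideanLin Wᵀ yt‖ ^ 2 / lambdaMinPos (Wᵀ * W) := part2b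
    _ ≤ sSup ((fun g => ‖g‖ ^ 2) '' S) / lambdaMinPos (Wᵀ * W) := by gcongr
end

section
/- Let E be a real inner product space, Z ⊆ E nonempty, and H : Z → E a map with ‖H(z)‖ ≤ L₀ for all z ∈ Z (L₀ ≥ 0). Then for every M > 0, H satisfies the (M, 2L₀²/M)-condition on Z: for all z₁, z₂, z₃ ∈ Z, ⟨H(z₁) − H(z₂), z₁ − z₃⟩ ≤ (M/2)·‖z₁ − z₂‖² + (M/2)·‖z₁ − z₃‖² + 2L₀²/M. -/
/-!
By Young's inequality, `⟪x, y⟫ ≤ ‖x‖ ‖y‖ ≤ (M/2) ‖y‖² + ‖x‖² / (2M)`. Taking `x = H z₁ - H z₂`,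
whose norm is at most `2 L₀`, and `y = z₁ - z₃` gives the bound with `δ = (2L₀)² / (2M) = 2L₀² / M`.
-/

open RealInnerProductSpace

theorem real_inner_le_half_mul_norm_sq_add_norm_sq_div
    {E : Type*} [NormedAddCommGroup E] [InnerProductSpace ℝ E]
    {M : ℝ} (hM : 0 < M) (x y : E) :
    ⟪x, y⟫ ≤ M / 2 * ‖y‖ ^ 2 + ‖x‖ ^ 2 / (2 * M) := by
  have young : ‖x‖ * ‖y‖ ≤ M / 2 * ‖y‖ ^ 2 + ‖x‖ ^ 2 / (2 * M) := by
    have hsq : 0 ≤ (M * ‖y‖ - ‖x‖) ^ 2 / (2 * M) := by positivity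
    have expand : (M * ‖y‖ - ‖x‖) ^ 2 / (2 * M)
        = M / 2 * ‖y‖ ^ 2 + ‖x‖ ^ 2 / (2 * M) - ‖x‖ * ‖y‖ := by
      field_simp
      ring
    linarith
  exact (real_inner_le_norm x y).trans young

theorem real_inner_le_half_mul_norm_sq_add_of_norm_le
    {E : Type*} [NormedAddCommGroup E] [InnerProductSpace ℝ E]
    {M D : ℝ} (hM : 0 < M) {x : E} (hx : ‖x‖ ≤ D) (y : E) :
    ⟪x, y⟫ ≤ M / 2 * ‖y‖ ^ 2 + D ^ 2 / (2 * M) := by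
  have hsq : ‖x‖ ^ 2 ≤ D ^ 2 := pow_le_pow_left₀ (norm_nonneg x) hx 2
  calc ⟪x, y⟫ ≤ M / 2 * ‖y‖ ^ 2 + ‖x‖ ^ 2 / (2 * M) :=
        real_inner_le_half_mul_norm_sq_add_norm_sq_div hM x y
    _ ≤ M / 2 * ‖y‖ ^ 2 + D ^ 2 / (2 * M) := by gcongr

theorem bounded_operator_satisfies_inexact_condition_general
    {E : Type*} [NormedAddCommGroup E] [InnerProductSpace ℝ E]
    (Z : Set E)
    (H : E → E) (L₀ : ℝ)
    (hbound : ∀ z ∈ Z, ‖H z‖ ≤ L₀) :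
    ∀ M : ℝ, 0 < M → ∀ z₁ ∈ Z, ∀ z₂ ∈ Z, ∀ z₃ ∈ Z,
      ⟪H z₁ - H z₂, z₁ - z₃⟫
        ≤ M / 2 * ‖z₁ - z₂‖ ^ 2 + M / 2 * ‖z₁ - z₃‖ ^ 2 + 2 * L₀ ^ 2 / M := by
  intro M hM z₁ hz₁ z₂ hz₂ z₃ _
  have hdiff : ‖H z₁ - H z₂‖ ≤ 2 * L₀ := by
    simpa [two_mul] using norm_sub_le_of_le (hbound z₁ hz₁) (hbound z₂ hz₂)
  have hδ : (2 * L₀) ^ 2 / (2 * M) = 2 * L₀ ^ 2 / M := by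
    field_simp
  have hnonneg : 0 ≤ M / 2 * ‖z₁ - z₂‖ ^ 2 := by positivity
  have := real_inner_le_half_mul_norm_sq_add_of_norm_le hM hdiff (z₁ - z₃)
  linarith

theorem bounded_operator_satisfies_inexact_condition
    {E : Type*} [NormedAddCommGroup E] [InnerProductSpace ℝ E]
    (Z : Set E) (hZne : Z.Nonempty)
    (H : E → E) (L₀ : ℝ) (hL₀ : 0 ≤ L₀)
    (hbound : ∀ z ∈ Z, ‖H z‖ ≤ L₀) :
    ∀ M : ℝ, 0 < M → ∀ z₁ ∈ Z, ∀ z₂ ∈ Z, ∀ z₃ ∈ Z,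
      ⟪H z₁ - H z₂, z₁ - z₃⟫
        ≤ M / 2 * ‖z₁ - z₂‖ ^ 2 + M / 2 * ‖z₁ - z₃‖ ^ 2 + 2 * L₀ ^ 2 / M :=
  bounded_operator_satisfies_inexact_condition_general Z H L₀ hbound
end

section
/- Let X ⊆ ℝⁿ and Y ⊆ ℝᵐ be convex sets, F : X × Y → ℝ convex in x for each fixed y ∈ Y and concave in y for each fixed x ∈ X, W_x and W_y nonzero real matrices, and ε, R_α, R_β > 0. Define F_R(x, y) = F(x, y) + (R_α²/ε)·‖W_x x‖² − (R_β²/ε)·‖W_y y‖², φ(x) = sup_{y∈Y} [F(x, y) − (R_β²/ε)·‖W_y y‖²] (assumed finite on X), and h(y) = −F(x̄, y). Suppose (x̄, ȳ) ∈ X × Y satisfies F_R(x̄, y) − F_R(x, ȳ) ≤ 2ε for all (x, y) ∈ X × Y, and suppose the two multiplier conditions hold: (a) there exist ŷ ∈ Y with W_y ŷ = 0 and q ∈ ℝᵖ with ‖q‖ ≤ R_β such that h(ŷ) ≤ h(y) + ⟨q, W_y y⟩ for all y ∈ Y; (b) there exist x̂ ∈ X with W_x x̂ = 0 and p ∈ ℝ^{p'}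 with ‖p‖ ≤ R_α such that φ(x̂) ≤ φ(x) + ⟨p, W_x x⟩ for all x ∈ X. Then ‖W_y ȳ‖ ≤ 4ε/R_β, ‖W_x x̄‖ ≤ 4ε/R_α, and F(x̄, y) − F(x, ȳ) ≤ 2ε for all x ∈ X with W_x x = 0 and y ∈ Y with W_y y = 0. -/
open RealInnerProductSpace Matrix

theorem penalized_saddle_point_main
    {n m p q : ℕ}
    (X : Set (EuclideanSpace ℝ (Fin n))) (Y : Set (EuclideanSpace ℝ (Fin m)))
    (hX : Convex ℝ X) (hY : Convex ℝ Y)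
    (F : EuclideanSpace ℝ (Fin n) → EuclideanSpace ℝ (Fin m) → ℝ)
    (hFconv : ∀ y ∈ Y, ConvexOn ℝ X fun x => F x y)
    (hFconc : ∀ x ∈ X, ConcaveOn ℝ Y (F x))
    (Wx : Matrix (Fin p) (Fin n) ℝ) (hWx : Wx ≠ 0)
    (Wy : Matrix (Fin q) (Fin m) ℝ) (hWy : Wy ≠ 0)
    (ε Rα Rβ : ℝ) (hε : 0 < ε) (hRα : 0 < Rα) (hRβ : 0 < Rβ)
    (FR : EuclideanSpace ℝ (Fin n) → EuclideanSpace ℝ (Fin m) → ℝ)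
    (hFR : ∀ x y, FR x y = F x y + Rα ^ 2 / ε * ‖Matrix.toEuclideanLin Wx x‖ ^ 2
        - Rβ ^ 2 / ε * ‖Matrix.toEuclideanLin Wy y‖ ^ 2)
    (xb : EuclideanSpace ℝ (Fin n)) (yb : EuclideanSpace ℝ (Fin m))
    (hxb : xb ∈ X) (hyb : yb ∈ Y)
    (φ : EuclideanSpace ℝ (Fin n) → ℝ)
    (hφ : ∀ x, φ x = sSup
      ((fun y => F x y - Rβ ^ 2 / ε * ‖Matrix.toEuclideanLin Wy y‖ ^ 2) '' Y))
    (hφbdd : ∀ x ∈ X, BddAbove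
      ((fun y => F x y - Rβ ^ 2 / ε * ‖Matrix.toEuclideanLin Wy y‖ ^ 2) '' Y))
    (h : EuclideanSpace ℝ (Fin m) → ℝ) (hh : ∀ y, h y = -F xb y)
    (hgap : ∀ x ∈ X, ∀ y ∈ Y, FR xb y - FR x yb ≤ 2 * ε)
    (yhat : EuclideanSpace ℝ (Fin m)) (hyhatY : yhat ∈ Y)
    (hyhat : Matrix.toEuclideanLin Wy yhat = 0)
    (qv : EuclideanSpace ℝ (Fin q)) (hqv : ‖qv‖ ≤ Rβ)
    (hqmult : ∀ y ∈ Y, h yhat ≤ h y + ⟪qv, Matrix.toEuclideanLin Wy y⟫)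
    (xhat : EuclideanSpace ℝ (Fin n)) (hxhatX : xhat ∈ X)
    (hxhat : Matrix.toEuclideanLin Wx xhat = 0)
    (pv : EuclideanSpace ℝ (Fin p)) (hpv : ‖pv‖ ≤ Rα)
    (hpmult : ∀ x ∈ X, φ xhat ≤ φ x + ⟪pv, Matrix.toEuclideanLin Wx x⟫) :
    ‖Matrix.toEuclideanLin Wy yb‖ ≤ 4 * ε / Rβ
    ∧ ‖Matrix.toEuclideanLin Wx xb‖ ≤ 4 * ε / Rα
    ∧ ∀ x ∈ X, Matrix.toEuclideanLin Wx x = 0 →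
        ∀ y ∈ Y, Matrix.toEuclideanLin Wy y = 0 →
          F xb y - F x yb ≤ 2 * ε := by

  have hεne : ε ≠ 0 := hε.ne'
  set A := ‖Matrix.toEuclideanLin Wx xb‖ with hAdef
  set B := ‖Matrix.toEuclideanLin Wy yb‖ with hBdef
  have hA0 : 0 ≤ A := norm_nonneg _
  have hB0 : 0 ≤ B := norm_nonneg _
  -- bound on B
  have hBkey : Rβ * B ≤ 2 * ε := by
    have h1 := hgap xb hxb yhat hyhatY
    rw [hFR, hFR, hyhat] at h1
    simp only [norm_zero] at h1
    have h2 := hqmult yb hyb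
    rw [hh, hh] at h2
    have h3 : ⟪qv, Matrix.toEuclideanLin Wy yb⟫ ≤ Rβ * B := by
      calc ⟪qv, Matrix.toEuclideanLin Wy yb⟫ ≤ ‖qv‖ * B := real_inner_le_norm _ _
        _ ≤ Rβ * B := by gcongr
    have e3 : Rβ ^ 2 / ε * B ^ 2 ≤ 2 * ε + Rβ * B := by linarith
    have e4 : ε * (Rβ ^ 2 / ε * B ^ 2) = (Rβ * B) ^ 2 := by field_simp
    have e5 : (Rβ * B) ^ 2 ≤ ε * (2 * ε + Rβ * B) := by
      rw [← e4]; exact mul_le_mul_of_nonneg_left e3 hε.le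
    nlinarith [mul_nonneg (mul_nonneg hRβ.le hB0) hε.le]
  have hBfin : B ≤ 4 * ε / Rβ := by
    rw [le_div_iff₀ hRβ]; nlinarith
  -- bound on A
  have hAkey : Rα * A ≤ 2 * ε := by
    have hφhat : F xhat yb - Rβ ^ 2 / ε * B ^ 2 ≤ φ xhat := by
      rw [hφ]; exact le_csSup (hφbdd xhat hxhatX) ⟨yb, hyb, rfl⟩
    have hφxb : φ xb ≤ 2 * ε + F xhat yb - Rβ ^ 2 / ε * B ^ 2 - Rα ^ 2 / ε * A ^ 2 := by
      rw [hφ]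
      apply csSup_le (Set.Nonempty.image _ ⟨yb, hyb⟩)
      rintro z ⟨y, hy, rfl⟩
      have hg := hgap xhat hxhatX y hy
      rw [hFR, hFR, hxhat] at hg
      simp only [norm_zero] at hg
      simp only []
      linarith
    have hp := hpmult xb hxb
    have h3 : ⟪pv, Matrix.toEuclideanLin Wx xb⟫ ≤ Rα * A := by
      calc ⟪pv, Matrix.toEuclideanLin Wx xb⟫ ≤ ‖pv‖ * A := real_inner_le_norm _ _
        _ ≤ Rα * A := by gcongr
    have e3 : Rα ^ 2 / ε * A ^ 2 ≤ 2 * ε + Rα * A := by linarith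
    have e4 : ε * (Rα ^ 2 / ε * A ^ 2) = (Rα * A) ^ 2 := by field_simp
    have e5 : (Rα * A) ^ 2 ≤ ε * (2 * ε + Rα * A) := by
      rw [← e4]; exact mul_le_mul_of_nonneg_left e3 hε.le
    nlinarith [mul_nonneg (mul_nonneg hRα.le hA0) hε.le]
  have hAfin : A ≤ 4 * ε / Rα := by
    rw [le_div_iff₀ hRα]; nlinarith
  refine ⟨hBfin, hAfin, ?_⟩
  intro x hx hWxx y hy hWyy
  have hg := hgap x hx y hy
  rw [hFR, hFR, hWxx, hWyy] at hg
  simp only [norm_zero] at hg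
  have p1 : 0 ≤ Rα ^ 2 / ε * A ^ 2 := by positivity
  have p2 : 0 ≤ Rβ ^ 2 / ε * B ^ 2 := by positivity
  linarith
end
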